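/- Let G be a graph on n > 10 vertices whose complement has edge density p ≤ 1/10 and maximum degree Δ̄. If v₁ is a nonnegative unit eigenvector of the adjacency matrix corresponding to the largest eigenvalue, then for every vertex i: (1 − 3Δ̄/n)/√n ≤ v₁(i) ≤ (1 + 2p + 2/n)/√n. -/

import Mathlib

/-!
Write `s = ∑ⱼ v₁ j` and `t = λ₁ + 1`. Since every vertex other than `i` is adjacent to `i` in
exactly one of `G` and `Ḡ`, the eigenvalue equation gives `t v₁ i = s - ∑_{j ∈ N_Ḡ(i)} v₁ j`.
Hence `t v₁ i ≤ s`, which yields `t ≤ s² ≤ n`, and `t v₁ i ≥ s - Δ̄ s / t`. Testing the Rayleigh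
quotient on the all-ones vector gives `t ≥ n - p (n - 1)`, and both bounds follow by elementary
estimates.
-/

open Finset Matrix SimpleGraph

theorem Matrix.IsHermitian.dotProduct_mulVec_le_of_eigenvalue_le {ι : Type*} [Fintype ι]
    [DecidableEq ι] {A : Matrix ι ι ℝ} (hA : A.IsHermitian) {c : ℝ}
    (hc : ∀ (μ : ℝ) (v : ι → ℝ), v ≠ 0 → A *ᵥ v = μ • v → μ ≤ c) (x : ι → ℝ) :
    x ⬝ᵥ A *ᵥ x ≤ c * (x ⬝ᵥ x) := by
  have hB : (c • 1 - A).IsHermitian := (isHermitian_one.smul (IsSelfAdjoint.all c)).sub hA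
  -- An eigenvector of `c • 1 - A` for `β` is one of `A` for `c - β ≤ c`, so `β ≥ 0`.
  have hpsd : (c • 1 - A).PosSemidef := by
    refine hB.posSemidef_iff_eigenvalues_nonneg.mpr fun j => ?_
    have hu : A *ᵥ ⇑(hB.eigenvectorBasis j) =
        (c - hB.eigenvalues j) • ⇑(hB.eigenvectorBasis j) := by
      have := hB.mulVec_eigenvectorBasis j
      rw [sub_mulVec, smul_mulVec, one_mulVec] at this
      rw [sub_smul, ← this]
      abel
    have := hc _ _ (by simpa using hB.eigenvectorBasis.orthonormal.ne_zero j) hu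
    simp only [Pi.zero_apply]
    linarith
  have := hpsd.re_dotProduct_nonneg x
  simp only [star_trivial, RCLike.re_to_real, sub_mulVec, smul_mulVec, one_mulVec, dotProduct_sub,
    dotProduct_smul, smul_eq_mul] at this
  linarith

namespace SimpleGraph

variable {V : Type*} [Fintype V] [DecidableEq V] (G : SimpleGraph V) [DecidableRel G.Adj]
  [DecidableRel Gᶜ.Adj]

theorem card_edgeFinset_add_card_edgeFinset_compl :
    #G.edgeFinset + #Gᶜ.edgeFinset = (Fintype.card V).choose 2 := by
  rw [← card_union_of_disjoint (disjoint_edgeFinset.mpr disjoint_compl_right), ← edgeFinset_sup,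
    ← card_edgeFinset_top_eq_card_choose_two]
  congr! 2
  exact sup_compl_eq_top

theorem one_sub_density_compl_mul_le [Nonempty V] {c : ℝ}
    (hc : ∀ (μ : ℝ) (v : V → ℝ), v ≠ 0 → G.adjMatrix ℝ *ᵥ v = μ • v → μ ≤ c) :
    (1 - #Gᶜ.edgeFinset / (Fintype.card V).choose 2 : ℝ) * (Fintype.card V - 1) ≤ c := by
  set N : ℝ := (Fintype.card V : ℝ)
  have hN : 0 < N := Nat.cast_pos.mpr Fintype.card_pos
  have h2e : 2 * (#G.edgeFinset : ℝ) ≤ c * N := by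
    have := (G.isHermitian_adjMatrix ℝ).dotProduct_mulVec_le_of_eigenvalue_le hc 1
    rw [dotProduct_comm, ← natCast_card_dart_eq_dotProduct, dart_card_eq_twice_card_edges] at this
    simpa [N, dotProduct] using this
  set C : ℝ := ((Fintype.card V).choose 2 : ℝ)
  have hchoose : C = N * (N - 1) / 2 := Nat.cast_choose_two ℝ _
  have hsum : (#G.edgeFinset : ℝ) + #Gᶜ.edgeFinset = C := by
    simp only [C]
    exact_mod_cast G.card_edgeFinset_add_card_edgeFinset_compl
  -- `C = 0` (a single vertex) forces `Gᶜ` to be edgeless, so the junk value `x / 0` is harmless.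
  have hcompl : (#Gᶜ.edgeFinset / C : ℝ) * C = #Gᶜ.edgeFinset :=
    div_mul_cancel_of_imp fun h => by linarith [(#G.edgeFinset).cast_nonneg (α := ℝ)]
  refine le_of_mul_le_mul_right ?_ hN
  linear_combination h2e - 2 * hsum - 2 * hcompl + (2 * (#Gᶜ.edgeFinset / C : ℝ) - 2) * hchoose

theorem sum_eq_add_sum_neighborFinset_add_sum_neighborFinset_compl {M : Type*}
    [AddCommMonoid M] (f : V → M) (i : V) :
    ∑ j, f j = f i + ∑ j ∈ G.neighborFinset i, f j + ∑ j ∈ Gᶜ.neighborFinset i, f j := by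
  have hcompl : Gᶜ.neighborFinset i = (G.neighborFinset i)ᶜ \ {i} := by
    convert G.neighborFinset_compl i
  rw [← sum_add_sum_compl (G.neighborFinset i), hcompl,
    sum_eq_add_sum_sdiff_singleton_of_mem (s := (G.neighborFinset i)ᶜ) (i := i) (by simp)]
  abel

theorem sum_eq_add_one_mul_add_sum_neighborFinset_compl {μ : ℝ} {v : V → ℝ}
    (hv : G.adjMatrix ℝ *ᵥ v = μ • v) (i : V) :
    ∑ j, v j = (μ + 1) * v i + ∑ j ∈ Gᶜ.neighborFinset i, v j := by
  have hi : ∑ j ∈ G.neighborFinset i, v j = μ * v i := by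
    rw [← adjMatrix_mulVec_apply, hv, Pi.smul_apply, smul_eq_mul]
  rw [G.sum_eq_add_sum_neighborFinset_add_sum_neighborFinset_compl v i, hi]
  ring

end SimpleGraph

theorem SimpleGraph.sum_neighborFinset_le_maxDegree_mul {V : Type*} [Fintype V]
    (G : SimpleGraph V) [DecidableRel G.Adj] {f : V → ℝ} {M : ℝ} (hM : 0 ≤ M)
    (hf : ∀ j, f j ≤ M) (i : V) :
    ∑ j ∈ G.neighborFinset i, f j ≤ G.maxDegree * M :=
  calc ∑ j ∈ G.neighborFinset i, f j ≤ #(G.neighborFinset i) • M :=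
        sum_le_card_nsmul _ _ _ fun j _ => hf j
    _ ≤ G.maxDegree * M := by
        rw [nsmul_eq_mul, card_neighborFinset_eq_degree]
        gcongr
        exact_mod_cast G.degree_le_maxDegree i

theorem le_sq_sum_of_forall_mul_le_sum {ι : Type*} [Fintype ι] {v : ι → ℝ} {t : ℝ}
    (hv : ∀ i, 0 ≤ v i) (hunit : ∑ i, v i ^ 2 = 1) (ht : ∀ i, t * v i ≤ ∑ j, v j) :
    t ≤ (∑ i, v i) ^ 2 := by
  calc t = ∑ i, t * v i * v i := by simp_rw [mul_assoc, ← sq, ← mul_sum, hunit, mul_one]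
    _ ≤ ∑ i, (∑ j, v j) * v i := sum_le_sum fun i _ => mul_le_mul_of_nonneg_right (ht i) (hv i)
    _ = (∑ i, v i) ^ 2 := by rw [← mul_sum, sq]

theorem one_div_sqrt_le_div_of_le_sq {N s t : ℝ} (hN : 0 < N) (ht : 0 < t) (hs : 0 ≤ s)
    (hts : t ≤ s ^ 2) (hsN : s ^ 2 ≤ N) :
    1 / √N ≤ s / t := by
  rw [div_le_div_iff₀ (Real.sqrt_pos.mpr hN) ht, one_mul]
  have hsq : t * t ≤ (s * √N) ^ 2 := by
    rw [mul_pow, Real.sq_sqrt hN.le]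
    nlinarith
  nlinarith [mul_nonneg hs (Real.sqrt_nonneg N)]

theorem one_sub_three_mul_div_div_sqrt_le {N t s Δ x : ℝ} (hN : 0 < N) (ht : N ≤ 3 * t)
    (hΔ : 0 ≤ Δ) (hs : 0 ≤ s) (hts : t ≤ s ^ 2) (hsN : s ^ 2 ≤ N) (hx : 0 ≤ x)
    (hsx : s ≤ t * x + Δ * (s / t)) :
    (1 - 3 * Δ / N) / √N ≤ x := by
  rcases le_or_gt (1 - 3 * Δ / N) 0 with hneg | hpos
  · exact (div_nonpos_of_nonpos_of_nonneg hneg (Real.sqrt_nonneg N)).trans hx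
  have ht0 : 0 < t := by linarith
  have hΔt : Δ / t ≤ 3 * Δ / N := by
    rw [div_le_div_iff₀ ht0 hN]
    nlinarith
  calc (1 - 3 * Δ / N) / √N = 1 / √N * (1 - 3 * Δ / N) := by ring
    _ ≤ s / t * (1 - Δ / t) :=
        mul_le_mul (one_div_sqrt_le_div_of_le_sq hN ht0 hs hts hsN) (by linarith) hpos.le
          (div_nonneg hs ht0.le)
    _ = (s - Δ * (s / t)) / t := by field_simp
    _ ≤ x := by
        rw [div_le_iff₀ ht0]
        linarith

theorem le_one_add_two_mul_add_two_div_div_sqrt {N p t s x : ℝ} (hN : 0 < N) (hp0 : 0 ≤ p)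
    (hp : p ≤ 1 / 2) (ht : N - p * (N - 1) ≤ t) (hsN : s ^ 2 ≤ N) (hx : t * x ≤ s) :
    x ≤ (1 + 2 * p + 2 / N) / √N := by
  have ht0 : 0 < t := by nlinarith
  -- `N ≤ (N - p (N - 1)) (1 + 2p + 2/N)` expands to `N ≤ N + p(1 - 2p)N + (2 - p) + 2p² + 2p/N`.
  have key : N * N ≤ (N - p * (N - 1)) * (N + 2 * p * N + 2) := by
    nlinarith [mul_nonneg (mul_nonneg (mul_nonneg hp0 hN.le) hN.le) (by linarith : 0 ≤ 1 - 2 * p),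
      mul_nonneg (mul_nonneg hp0 hp0) hN.le, mul_nonneg hp0 hN.le]
  have hsqrt : √N / t ≤ (1 + 2 * p + 2 / N) / √N := by
    rw [div_le_div_iff₀ ht0 (Real.sqrt_pos.mpr hN), Real.mul_self_sqrt hN.le,
      show (1 + 2 * p + 2 / N) * t = t * (N + 2 * p * N + 2) / N by field_simp, le_div_iff₀ hN]
    nlinarith [mul_le_mul_of_nonneg_right ht (by positivity : 0 ≤ N + 2 * p * N + 2)]
  calc x ≤ s / t := (le_div_iff₀' ht0).mpr hx
    _ ≤ √N / t := by
        gcongr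
        exact Real.le_sqrt_of_sq_le hsN
    _ ≤ (1 + 2 * p + 2 / N) / √N := hsqrt

theorem principal_eigenvector_bounds {n : ℕ}
    (G : SimpleGraph (Fin n)) [DecidableRel G.Adj] [DecidableRel Gᶜ.Adj]
    (p : ℝ) (hpdef : p = (Gᶜ.edgeFinset.card : ℝ) / (n.choose 2)) (hple : p ≤ 1 / 10)
    (Δbar : ℕ) (hΔ : Δbar = Gᶜ.maxDegree)
    (lam1 : ℝ) (v1 : Fin n → ℝ)
    (hv1 : (G.adjMatrix ℝ).mulVec v1 = lam1 • v1)
    (hpos : ∀ i, 0 ≤ v1 i)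
    (hunit : ∑ i, (v1 i) ^ 2 = 1)
    (hmax : ∀ (μ : ℝ) (v : Fin n → ℝ), v ≠ 0 → (G.adjMatrix ℝ).mulVec v = μ • v → μ ≤ lam1) :
    ∀ i, (1 - 3 * (Δbar : ℝ) / n) / Real.sqrt n ≤ v1 i ∧
      v1 i ≤ (1 + 2 * p + 2 / n) / Real.sqrt n := by
  intro i
  have : Nonempty (Fin n) := ⟨i⟩
  have hN : (0 : ℝ) < n := Nat.cast_pos.mpr i.pos
  have hp0 : 0 ≤ p := hpdef ▸ by positivity
  have ht : n - p * (n - 1) ≤ lam1 + 1 := by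
    have := G.one_sub_density_compl_mul_le hmax
    rw [Fintype.card_fin, ← hpdef] at this
    linarith
  have ht0 : 0 < lam1 + 1 := by nlinarith
  have hsplit := G.sum_eq_add_one_mul_add_sum_neighborFinset_compl hv1
  have hs0 : 0 ≤ ∑ j, v1 j := sum_nonneg fun j _ => hpos j
  have hcoord (j : Fin n) : (lam1 + 1) * v1 j ≤ ∑ j, v1 j :=
    (le_add_of_nonneg_right (sum_nonneg fun k _ => hpos k)).trans_eq (hsplit j).symm
  have hts := le_sq_sum_of_forall_mul_le_sum hpos hunit hcoord
  have hsN : (∑ j, v1 j) ^ 2 ≤ n := by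
    simpa [hunit] using sq_sum_le_card_mul_sum_sq (s := univ) (f := v1)
  have hcompl := Gᶜ.sum_neighborFinset_le_maxDegree_mul (div_nonneg hs0 ht0.le)
    (fun j => (le_div_iff₀' ht0).mpr (hcoord j)) i
  rw [← hΔ] at hcompl
  exact ⟨one_sub_three_mul_div_div_sqrt_le hN (by nlinarith) (Nat.cast_nonneg _) hs0 hts hsN
      (hpos i) (by linarith [hsplit i]),
    le_one_add_two_mul_add_two_div_div_sqrt hN hp0 (by linarith) ht hsN (hcoord i)⟩
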